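/- Let $k \ge 2$, $x, y > 0$ with $y \le x/2$, $\mathcal{I} = (x-y, x+y]$, and for a complex number $s = \sigma + it$ with $\sigma = 1/2$ define $v(\beta; s) = \int_{\mathcal{I}} u^{s-1} e(u^k \beta)\, du$. Then $\big| v(\beta; s) - x^{s-1} v(\beta; 1) \big| \ll (|s| + 1)\, y^2 x^{-3/2}$, uniformly in $\beta \in \mathbb{R}$, with an absolute implied constant. -/

import Mathlib

open MeasureTheory

/-- `eC r = exp(2πir)`. -/
noncomputable def eC (r : ℝ) : ℂ := Complex.exp (2 * Real.pi * Complex.I * r)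

/-!
On `(x - y, x + y] ⊆ [x/2, 3x/2]` the derivative `(s - 1) u^(s - 2)` of `u ↦ u^(s - 1)` has norm at
most `(|s| + 1) (x/2)^(-3/2)`, so by the mean value theorem `|u^(s-1) - x^(s-1)| ≪ (|s| + 1) x^(-3/2) y`.
Since `|e(u^k β)| = 1`, integrating this over an interval of length `2y` gives the bound.
-/

open Set
open scoped Interval

theorem norm_eC (r : ℝ) : ‖eC r‖ = 1 := by
  simp [eC, Complex.norm_exp]

theorem continuous_eC : Continuous eC := by
  unfold eC; fun_prop

theorem norm_ofReal_cpow_sub_le {a u x : ℝ} (ha : 0 < a) (hu : a ≤ u) (hx : a ≤ x) {w : ℂ}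
    (hw : w.re ≤ 1) : ‖(u : ℂ) ^ w - (x : ℂ) ^ w‖ ≤ ‖w‖ * a ^ (w.re - 1) * |u - x| := by
  rcases eq_or_ne w 0 with rfl | hw0
  · simp
  have hderiv : ∀ v ∈ Ici a,
      HasDerivWithinAt (fun v : ℝ => (v : ℂ) ^ w) (w * (v : ℂ) ^ (w - 1)) (Ici a) v :=
    fun v hv => (hasDerivAt_ofReal_cpow_const (ha.trans_le hv).ne' hw0).hasDerivWithinAt
  have hbound : ∀ v ∈ Ici a, ‖w * (v : ℂ) ^ (w - 1)‖ ≤ ‖w‖ * a ^ (w.re - 1) := by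
    intro v hv
    rw [norm_mul, Complex.norm_cpow_eq_rpow_re_of_pos (ha.trans_le hv), Complex.sub_re,
      Complex.one_re]
    exact mul_le_mul_of_nonneg_left (Real.rpow_le_rpow_of_nonpos ha hv (by linarith))
      (norm_nonneg w)
  simpa [← Real.norm_eq_abs] using
    (convex_Ici a).norm_image_sub_le_of_norm_hasDerivWithin_le hderiv hbound hx hu

theorem norm_integral_mul_sub_mul_integral_le {f g : ℝ → ℂ} {a b x L : ℝ}
    (hfg : IntervalIntegrable (fun u => f u * g u) volume a b)
    (hg : IntervalIntegrable g volume a b)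
    (hf : ∀ u ∈ Ι a b, ‖f u - f x‖ ≤ L) (hg1 : ∀ u ∈ Ι a b, ‖g u‖ ≤ 1) :
    ‖(∫ u in a..b, f u * g u) - f x * ∫ u in a..b, g u‖ ≤ L * |b - a| := by
  rw [← intervalIntegral.integral_const_mul, ← intervalIntegral.integral_sub hfg (hg.const_mul _)]
  refine intervalIntegral.norm_integral_le_of_norm_le_const fun u hu => ?_
  rw [← sub_mul, norm_mul]
  simpa using mul_le_mul (hf u hu) (hg1 u hu) (norm_nonneg _) ((norm_nonneg _).trans (hf u hu))

theorem div_two_rpow_neg_three_halves_le {x : ℝ} (hx : 0 ≤ x) :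
    (x / 2) ^ (-(3 / 2) : ℝ) ≤ 4 * x ^ (-(3 / 2) : ℝ) := by
  have h : (2 : ℝ) ^ (-2 : ℝ) ≤ 2 ^ (-(3 / 2) : ℝ) :=
    Real.rpow_le_rpow_of_exponent_le (by norm_num) (by norm_num)
  rw [Real.div_rpow hx zero_le_two, div_le_iff₀ (by positivity)]
  rw [Real.rpow_neg zero_le_two, Real.rpow_two] at h
  nlinarith [Real.rpow_nonneg hx (-(3 / 2) : ℝ)]

theorem norm_ofReal_cpow_sub_one_sub_le_of_re_eq_half {s : ℂ} (hs : s.re = 1 / 2) {x y u : ℝ}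
    (hx : 0 < x) (hyx : y ≤ x / 2) (hu : u ∈ Icc (x - y) (x + y)) :
    ‖(u : ℂ) ^ (s - 1) - (x : ℂ) ^ (s - 1)‖ ≤ (‖s‖ + 1) * (4 * x ^ (-(3 / 2) : ℝ)) * y := by
  have hux : |u - x| ≤ y := abs_le.2 ⟨by linarith [hu.1], by linarith [hu.2]⟩
  have hre : (s - 1).re - 1 = -(3 / 2) := by rw [Complex.sub_re, hs]; norm_num
  calc _ ≤ ‖s - 1‖ * (x / 2) ^ ((s - 1).re - 1) * |u - x| :=
        norm_ofReal_cpow_sub_le (half_pos hx) (by linarith [hu.1]) (half_le_self hx.le)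
          (by linarith)
    _ ≤ (‖s‖ + 1) * (4 * x ^ (-(3 / 2) : ℝ)) * y := by
        rw [hre]
        gcongr
        · simpa using norm_sub_le s 1
        · exact div_two_rpow_neg_three_halves_le hx.le

theorem stmt_5 :
    ∃ C > 0, ∀ (k : ℕ), 2 ≤ k → ∀ x y β t : ℝ, 0 < x → 0 < y → y ≤ x / 2 →
      ‖(∫ u in (x - y)..(x + y),
            (u : ℂ) ^ ((1/2 : ℂ) + t * Complex.I - 1) * eC (u ^ k * β)) -
          (x : ℂ) ^ ((1/2 : ℂ) + t * Complex.I - 1) *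
            ∫ u in (x - y)..(x + y), eC (u ^ k * β)‖ ≤
        C * (‖(1/2 : ℂ) + t * Complex.I‖ + 1) * y ^ 2 * x ^ (-(3/2) : ℝ) := by
  refine ⟨8, by norm_num, fun k _ x y β t hx hy hyx => ?_⟩
  set s : ℂ := (1/2 : ℂ) + t * Complex.I
  have hs : s.re = 1 / 2 := by norm_num [s]
  have hI : uIcc (x - y) (x + y) = Icc (x - y) (x + y) := uIcc_of_le (by linarith)
  have hcpow : ContinuousOn (fun u : ℝ => (u : ℂ) ^ (s - 1)) (uIcc (x - y) (x + y)) :=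
    fun u hu => (Complex.continuousAt_ofReal_cpow_const _ _
      (Or.inr (by rw [hI] at hu; linarith [hu.1]))).continuousWithinAt
  have hexp : Continuous fun u : ℝ => eC (u ^ k * β) := continuous_eC.comp (by fun_prop)
  calc _ ≤ (‖s‖ + 1) * (4 * x ^ (-(3 / 2) : ℝ)) * y * |(x + y) - (x - y)| :=
        norm_integral_mul_sub_mul_integral_le ((hcpow.mul hexp.continuousOn).intervalIntegrable)
          (hexp.intervalIntegrable _ _)
          (fun u hu => norm_ofReal_cpow_sub_one_sub_le_of_re_eq_half hs hx hyx
            (hI ▸ uIoc_subset_uIcc hu))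
          fun u _ => (norm_eC _).le
    _ = 8 * (‖s‖ + 1) * y ^ 2 * x ^ (-(3 / 2) : ℝ) := by
        rw [abs_of_nonneg (by linarith)]; ring
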